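/- Suppose Ω satisfies Condition (*). Equip N_Ω ⊆ ℍ^{k+2} with the subspace topology, and let ~ be the equivalence relation on N_Ω given by x ~ y iff there is a (k+2)-tuple t of unit complex quaternions with y_p = t_p·x_p for all p. Let K = {s ∈ ℍ^{k+2} : every s_p is purely imaginary, Σ_{p=1}^{k+2} s_p·Ω_{pj} = 0 for j = 1,…,k, and Σ_{p=1}^{k+2} ‖s_p‖ = 1}, with the subspace topology. Then there is a homeomorphism h from the quotient space N_Ω/~ onto K such that h([x]) = ((star x_p)·i·x_p)_{p=1}^{k+2} for every x ∈ N_Ω. -/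

import Mathlib

/-!
The map `hopf a = (star a) i a` sends `ℍ` onto the purely imaginary quaternions, with
`‖hopf a‖ = ‖a‖²`, and `hopf a = hopf b` exactly when `b = t a` for a unit complex `t`,
because then `b a⁻¹` commutes with `i`. Applied coordinatewise it induces a continuous
bijection from `N_Ω / ~` onto `K`, a homeomorphism since `N_Ω` is compact and `K` Hausdorff.
-/

open Finset
open scoped Quaternion

/-- The imaginary unit `i` of the quaternions. -/
def qI : ℍ := ⟨0, 1, 0, 0⟩

/-- A quaternion is a *unit complex* quaternion if its `j`- and `k`-components vanish
and it has norm `1`. -/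
def IsUnitComplexQ (z : ℍ) : Prop := z.imJ = 0 ∧ z.imK = 0 ∧ ‖z‖ = 1

/-- Determinant of the submatrix of `Ω` obtained by deleting the rows in `s`. -/
noncomputable def minorDet (k : ℕ) (Ω : Matrix (Fin (k + 2)) (Fin k) ℤ)
    (s : Finset (Fin (k + 2))) : ℤ :=
  if h : sᶜ.card = k then (Ω.submatrix (sᶜ.orderEmbOfFin h) id).det else 0

/-- `Δ_{pq}`: determinant of `Ω` with rows `p` and `q` deleted. -/
noncomputable def Delta (k : ℕ) (Ω : Matrix (Fin (k + 2)) (Fin k) ℤ) (p q : Fin (k + 2)) : ℤ :=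
  minorDet k Ω {p, q}

/-- Condition (*). -/
def CondStar (k : ℕ) (Ω : Matrix (Fin (k + 2)) (Fin k) ℤ) : Prop :=
  (∀ p q : Fin (k + 2), p ≠ q → Delta k Ω p q ≠ 0) ∧
  (∀ p : Fin (k + 2), (Finset.univ.erase p).gcd (fun q => (Delta k Ω p q).natAbs) = 1)

/-- The zero set `N_Ω` of the moment map `μ_Ω`, inside the unit sphere of `ℍ^{k+2}`. -/
def NOmega (k : ℕ) (Ω : Matrix (Fin (k + 2)) (Fin k) ℤ) : Set (Fin (k + 2) → ℍ) :=
  {x | (∑ p : Fin (k + 2), ‖x p‖ ^ 2 = 1) ∧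
    ∀ j : Fin k, ∑ p : Fin (k + 2), star (x p) * qI * x p * ((Ω p j : ℤ) : ℍ) = 0}

/-- The equivalence relation on `N_Ω`: `x ~ y` iff `y` is obtained from `x` by the
action of a tuple of unit complex quaternions. -/
def torusRel (k : ℕ) (Ω : Matrix (Fin (k + 2)) (Fin k) ℤ) :
    NOmega k Ω → NOmega k Ω → Prop := fun x y =>
  ∃ t : Fin (k + 2) → ℍ, (∀ p, IsUnitComplexQ (t p)) ∧
    ∀ p, (y : Fin (k + 2) → ℍ) p = t p * (x : Fin (k + 2) → ℍ) p

/-- The target `K`: purely imaginary tuples in the kernel of `Ωᵗ` of total norm `1`. -/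
def KSet (k : ℕ) (Ω : Matrix (Fin (k + 2)) (Fin k) ℤ) : Set (Fin (k + 2) → ℍ) :=
  {s | (∀ p, (s p).re = 0) ∧
    (∀ j : Fin k, ∑ p : Fin (k + 2), s p * ((Ω p j : ℤ) : ℍ) = 0) ∧
    ∑ p : Fin (k + 2), ‖s p‖ = 1}

@[simp] lemma re_qI : qI.re = 0 := rfl
@[simp] lemma imI_qI : qI.imI = 1 := rfl
@[simp] lemma imJ_qI : qI.imJ = 0 := rfl
@[simp] lemma imK_qI : qI.imK = 0 := rfl

lemma norm_qI : ‖qI‖ = 1 := by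
  rw [← pow_eq_one_iff_of_nonneg (norm_nonneg _) two_ne_zero, sq,
    ← Quaternion.normSq_eq_norm_mul_self, Quaternion.normSq_def']
  simp

lemma commute_qI_iff {z : ℍ} : Commute z qI ↔ z.imJ = 0 ∧ z.imK = 0 := by
  constructor
  · intro h
    have hj := congrArg QuaternionAlgebra.imJ h.eq
    have hk := congrArg QuaternionAlgebra.imK h.eq
    simp only [Quaternion.imJ_mul, Quaternion.imK_mul, re_qI, imI_qI, imJ_qI, imK_qI] at hj hk
    constructor <;> linarith
  · rintro ⟨hj, hk⟩
    ext <;> simp [Quaternion.re_mul, Quaternion.imI_mul, Quaternion.imJ_mul, Quaternion.imK_mul,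
      hj, hk]

noncomputable def hopf (a : ℍ) : ℍ := star a * qI * a

lemma continuous_hopf : Continuous hopf := by
  unfold hopf
  fun_prop

lemma re_hopf (a : ℍ) : (hopf a).re = 0 := by
  simp only [hopf, Quaternion.re_mul, Quaternion.imI_mul, Quaternion.imJ_mul,
      Quaternion.imK_mul, Quaternion.re_star, Quaternion.imI_star, Quaternion.imJ_star,
      Quaternion.imK_star, re_qI, imI_qI, imJ_qI, imK_qI]
  ring

lemma norm_hopf (a : ℍ) : ‖hopf a‖ = ‖a‖ ^ 2 := by
  rw [hopf, norm_mul, norm_mul, Quaternion.norm_star, norm_qI, mul_one, sq]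

lemma hopf_mul (t a : ℍ) : hopf (t * a) = star a * hopf t * a := by
  simp only [hopf, star_mul, mul_assoc]

lemma hopf_of_isUnitComplexQ {t : ℍ} (ht : IsUnitComplexQ t) : hopf t = qI := by
  obtain ⟨hj, hk, hn⟩ := ht
  rw [hopf, mul_assoc, ← (commute_qI_iff.2 ⟨hj, hk⟩).eq, ← mul_assoc,
    Quaternion.star_mul_self, Quaternion.normSq_eq_norm_mul_self, hn]
  simp

lemma hopf_of_re_eq_zero {a : ℍ} (ha : a.re = 0) :
    hopf a = ⟨0, a.imI ^ 2 - a.imJ ^ 2 - a.imK ^ 2, 2 * a.imI * a.imJ, 2 * a.imI * a.imK⟩ := by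
  ext <;> simp only [hopf, ha, Quaternion.re_mul, Quaternion.imI_mul, Quaternion.imJ_mul,
      Quaternion.imK_mul, Quaternion.re_star, Quaternion.imI_star, Quaternion.imJ_star,
      Quaternion.imK_star, re_qI, imI_qI, imJ_qI, imK_qI] <;> ring

lemma exists_hopf_eq {s : ℍ} (hs : s.re = 0) : ∃ a, hopf a = s := by
  set n := ‖s‖
  have hn0 : 0 ≤ n := norm_nonneg s
  have hn : s.imI ^ 2 + s.imJ ^ 2 + s.imK ^ 2 = n ^ 2 := by
    rw [sq n, ← Quaternion.normSq_eq_norm_mul_self, Quaternion.normSq_def', hs]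
    ring
  have hI : -n ≤ s.imI :=
    (abs_le_of_sq_le_sq' (by nlinarith [sq_nonneg s.imJ, sq_nonneg s.imK]) hn0).1
  rcases hI.eq_or_lt with hI | hI
  · have hJK : s.imJ ^ 2 + s.imK ^ 2 = 0 := by rw [← hI] at hn; linarith
    obtain ⟨hJ, hK⟩ : s.imJ = 0 ∧ s.imK = 0 := by
      simpa using (add_eq_zero_iff_of_nonneg (sq_nonneg _) (sq_nonneg _)).1 hJK
    refine ⟨_, (hopf_of_re_eq_zero (a := ⟨0, 0, √n, 0⟩) rfl).trans ?_⟩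
    ext <;> simp [hs, hJ, hK, ← hI, Real.sq_sqrt hn0]
  · -- `√‖s‖` times the unit vector bisecting `i` and `s / ‖s‖`; none exists when `s = -‖s‖ i`
    set u := √((n + s.imI) / 2)
    have hu : 0 < u := Real.sqrt_pos.2 (by linarith)
    have hu2 : u ^ 2 = (n + s.imI) / 2 := Real.sq_sqrt (by linarith)
    refine ⟨_,
      (hopf_of_re_eq_zero (a := ⟨0, u, s.imJ / (2 * u), s.imK / (2 * u)⟩) rfl).trans ?_⟩
    ext
    · exact hs.symm
    · field_simp
      linear_combination (4 * u ^ 2 + 2 * n - 2 * s.imI) * hu2 - hn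
    · field_simp
    · field_simp

lemma hopf_eq_hopf_iff {a b : ℍ} : hopf a = hopf b ↔ ∃ t, IsUnitComplexQ t ∧ b = t * a := by
  refine ⟨fun h => ?_, ?_⟩
  · have hnorm : ‖a‖ = ‖b‖ := by
      have := congrArg norm h
      rwa [norm_hopf, norm_hopf, pow_left_inj₀ (norm_nonneg _) (norm_nonneg _) two_ne_zero]
        at this
    rcases eq_or_ne a 0 with rfl | ha
    · refine ⟨1, ⟨by simp, by simp, norm_one⟩, ?_⟩
      rw [mul_zero, ← norm_eq_zero, ← hnorm, norm_zero]
    have hb : b ≠ 0 := by rwa [← norm_ne_zero_iff, ← hnorm, norm_ne_zero_iff]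
    have hcomm : Commute (b * a⁻¹) qI := by
      have hnormSq : Quaternion.normSq b = Quaternion.normSq a := by
        simp only [Quaternion.normSq_eq_norm_mul_self, hnorm]
      have key : star b * (b * a⁻¹ * qI * a) = star b * (qI * b) :=
        calc star b * (b * a⁻¹ * qI * a) = (star b * b) * a⁻¹ * qI * a := by noncomm_ring
          _ = hopf a := by
            rw [Quaternion.star_mul_self, hnormSq,
              ← (eq_mul_inv_iff_mul_eq₀ ha).2 (Quaternion.star_mul_self a), hopf]
          _ = star b * (qI * b) := by rw [h, hopf, mul_assoc]
      have := mul_left_cancel₀ (star_ne_zero.2 hb) key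
      calc b * a⁻¹ * qI = b * a⁻¹ * qI * a * a⁻¹ := (mul_inv_cancel_right₀ ha _).symm
        _ = qI * (b * a⁻¹) := by rw [this, mul_assoc]
    refine ⟨b * a⁻¹, ⟨(commute_qI_iff.1 hcomm).1, (commute_qI_iff.1 hcomm).2, ?_⟩, ?_⟩
    · rw [norm_mul, norm_inv, hnorm, mul_inv_cancel₀ (norm_ne_zero_iff.2 hb)]
    · rw [mul_assoc, inv_mul_cancel₀ ha, mul_one]
  · rintro ⟨t, ht, rfl⟩
    rw [hopf_mul, hopf_of_isUnitComplexQ ht, hopf]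

theorem Quot.exists_homeomorph_of_fiber_iff {X Y : Type*} [TopologicalSpace X] [CompactSpace X]
    [TopologicalSpace Y] [T2Space Y] {r : X → X → Prop} {f : X → Y} (hf : Continuous f)
    (hsurj : Function.Surjective f) (hfib : ∀ a b, f a = f b ↔ r a b) :
    ∃ h : Quot r ≃ₜ Y, ∀ x, h (Quot.mk r x) = f x := by
  let g : Quot r → Y := Quot.lift f fun a b hab => (hfib a b).2 hab
  have hg : Function.Bijective g := by
    refine ⟨?_, fun y => (hsurj y).elim fun x hx => ⟨Quot.mk r x, hx⟩⟩
    rintro ⟨a⟩ ⟨b⟩ hab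
    exact Quot.sound ((hfib a b).1 hab)
  exact ⟨(continuous_quot_lift _ hf).homeoOfEquivCompactToT2 (f := Equiv.ofBijective g hg),
    fun _ => rfl⟩

section MomentMap

variable (k : ℕ) (Ω : Matrix (Fin (k + 2)) (Fin k) ℤ)

lemma isCompact_NOmega : IsCompact (NOmega k Ω) := by
  refine Metric.isCompact_of_isClosed_isBounded ?_ ?_
  · simp only [NOmega, Set.ofPred_and, Set.ofPred_forall]
    exact (isClosed_eq (by fun_prop) continuous_const).inter
      (isClosed_iInter fun j => isClosed_eq (by fun_prop) continuous_const)
  · refine (Metric.isBounded_closedBall (x := 0) (r := 1)).subset fun x hx => ?_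
    rw [Metric.mem_closedBall, dist_zero_right, pi_norm_le_iff_of_nonneg zero_le_one]
    intro p
    have hle : ‖x p‖ ^ 2 ≤ 1 :=
      hx.1 ▸ Finset.single_le_sum (fun q _ => sq_nonneg ‖x q‖) (Finset.mem_univ p)
    nlinarith [norm_nonneg (x p)]

lemma hopf_mem_KSet {x : Fin (k + 2) → ℍ} (hx : x ∈ NOmega k Ω) :
    (fun p => hopf (x p)) ∈ KSet k Ω :=
  ⟨fun p => re_hopf _, hx.2, by simpa only [norm_hopf] using hx.1⟩

noncomputable def momentMap (x : NOmega k Ω) : KSet k Ω :=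
  ⟨fun p => hopf (x.1 p), hopf_mem_KSet k Ω x.2⟩

lemma continuous_momentMap : Continuous (momentMap k Ω) :=
  Continuous.subtype_mk (continuous_pi fun p =>
    continuous_hopf.comp ((continuous_apply p).comp continuous_subtype_val)) _

lemma momentMap_surjective : Function.Surjective (momentMap k Ω) := by
  rintro ⟨s, hre, hΩ, hnorm⟩
  choose x hx using fun p => exists_hopf_eq (hre p)
  have hxN : x ∈ NOmega k Ω := by
    refine ⟨?_, fun j => ?_⟩
    · simpa only [← hx, norm_hopf] using hnorm
    · simpa only [← hx, hopf] using hΩ j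
  exact ⟨⟨x, hxN⟩, Subtype.ext (funext hx)⟩

lemma momentMap_eq_iff (x y : NOmega k Ω) :
    momentMap k Ω x = momentMap k Ω y ↔ torusRel k Ω x y := by
  simp only [momentMap, Subtype.mk.injEq, funext_iff, hopf_eq_hopf_iff, torusRel]
  exact Classical.skolem.trans ⟨fun ⟨t, ht⟩ => ⟨t, fun p => (ht p).1, fun p => (ht p).2⟩,
    fun ⟨t, ht, hyt⟩ => ⟨t, fun p => ⟨ht p, hyt p⟩⟩⟩

end MomentMap

theorem quotient_homeomorph_KSet_general (k : ℕ)
    (Ω : Matrix (Fin (k + 2)) (Fin k) ℤ) :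
    ∃ h : Quot (torusRel k Ω) ≃ₜ KSet k Ω,
      ∀ x : NOmega k Ω, (h (Quot.mk (torusRel k Ω) x) : Fin (k + 2) → ℍ) =
        fun p => star ((x : Fin (k + 2) → ℍ) p) * qI * (x : Fin (k + 2) → ℍ) p := by
  have := isCompact_iff_compactSpace.1 (isCompact_NOmega k Ω)
  obtain ⟨h, hh⟩ := Quot.exists_homeomorph_of_fiber_iff (continuous_momentMap k Ω)
    (momentMap_surjective k Ω) (momentMap_eq_iff k Ω)
  exact ⟨h, fun x => congrArg Subtype.val (hh x)⟩

/-- The moment map induces a homeomorphism `N_Ω / ~ ≃ K`,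
`[x] ↦ ((star x_p)·i·x_p)_p`. -/
theorem quotient_homeomorph_KSet (k : ℕ) (hk : 2 ≤ k)
    (Ω : Matrix (Fin (k + 2)) (Fin k) ℤ) (hΩ : CondStar k Ω) :
    ∃ h : Quot (torusRel k Ω) ≃ₜ KSet k Ω,
      ∀ x : NOmega k Ω, (h (Quot.mk (torusRel k Ω) x) : Fin (k + 2) → ℍ) =
        fun p => star ((x : Fin (k + 2) → ℍ) p) * qI * (x : Fin (k + 2) → ℍ) p :=
  quotient_homeomorph_KSet_general k Ω
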